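/- arXiv:2202.07037 — 5 statements merged into one kernel-verified Lean document; each statement's English description precedes it below -/
import Mathlib

section
/- For a block matrix determinant: if J_{s+t} = [J_s J_t] is a real matrix with full column rank (J_s of size n×p, J_t of size n×q), then det(J_{s+t}^T J_{s+t}) = det(J_s^T J_s) · det(J_t^T J_t) · det(I - P_s P_t), where P_s = J_s (J_s^T J_s)^{-1} J_s^T and P_t = J_t (J_t^T J_t)^{-1} J_t^T are the orthogonal projections onto the column spaces of J_s and J_t. -/
open Matrix

/-- Determinant decomposition for a column-concatenated matrix with full column rank:
`det(Jₛₜᵀ Jₛₜ) = det(Jₛᵀ Jₛ) · det(Jₜᵀ Jₜ) · det(I - Pₛ Pₜ)` where `Pₛ, Pₜ` are the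
orthogonal projections onto the column spaces of `Jₛ` and `Jₜ`. -/
theorem stmt0 {n p q : ℕ}
    (Js : Matrix (Fin n) (Fin p) ℝ) (Jt : Matrix (Fin n) (Fin q) ℝ)
    (hrank : (fromCols Js Jt).rank = p + q)
    (hs : IsUnit (Jsᵀ * Js)) (ht : IsUnit (Jtᵀ * Jt)) :
    ((fromCols Js Jt)ᵀ * fromCols Js Jt).det
      = (Jsᵀ * Js).det * (Jtᵀ * Jt).det *
        (1 - (Js * (Jsᵀ * Js)⁻¹ * Jsᵀ) * (Jt * (Jtᵀ * Jt)⁻¹ * Jtᵀ)).det := by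
  have hs' : Invertible (Jsᵀ * Js) := hs.invertible
  have htd : IsUnit (Jtᵀ * Jt).det := (Matrix.isUnit_iff_isUnit_det _).mp ht
  have h1 : ((fromCols Js Jt)ᵀ * fromCols Js Jt)
      = fromBlocks (Jsᵀ * Js) (Jsᵀ * Jt) (Jtᵀ * Js) (Jtᵀ * Jt) := by
    rw [transpose_fromCols, fromRows_mul_fromCols]
  rw [h1, det_fromBlocks₁₁, invOf_eq_nonsing_inv]
  have h2 : (1 - (Js * (Jsᵀ * Js)⁻¹ * Jsᵀ) * (Jt * (Jtᵀ * Jt)⁻¹ * Jtᵀ)).det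
      = (1 - (Jtᵀ * (Js * (Jsᵀ * Js)⁻¹ * Jsᵀ * (Jt * (Jtᵀ * Jt)⁻¹)))).det := by
    rw [show (Js * (Jsᵀ * Js)⁻¹ * Jsᵀ) * (Jt * (Jtᵀ * Jt)⁻¹ * Jtᵀ)
        = (Js * (Jsᵀ * Js)⁻¹ * Jsᵀ * (Jt * (Jtᵀ * Jt)⁻¹)) * Jtᵀ by
      simp only [Matrix.mul_assoc]]
    rw [det_one_sub_mul_comm]
  have h3 : (1 - (Jtᵀ * (Js * (Jsᵀ * Js)⁻¹ * Jsᵀ * (Jt * (Jtᵀ * Jt)⁻¹)))) * (Jtᵀ * Jt)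
      = Jtᵀ * Jt - Jtᵀ * Js * (Jsᵀ * Js)⁻¹ * (Jsᵀ * Jt) := by
    rw [Matrix.sub_mul, Matrix.one_mul]
    congr 1
    simp only [Matrix.mul_assoc]
    rw [Matrix.nonsing_inv_mul _ htd, Matrix.mul_one]
  have h4 := congrArg det h3
  rw [det_mul, ← h2] at h4
  rw [← h4]; ring
end

section
/- Let G_s ∈ ℝ^{p×n} and G_t ∈ ℝ^{q×n} with G = [G_s; G_t] having full row rank. Then det(G G^T) = det(G_s G_s^T) · det(G_t G_t^T) · det(I - Q_s Q_t), where Q_s = G_s^T (G_s G_s^T)^{-1} G_s and Q_t = G_t^T (G_t G_t^T)^{-1} G_t are orthogonal projections onto the row spaces of G_s and G_t. -/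
open Matrix

/-- A square real matrix of full rank is a unit. -/
lemma isUnit_of_rank_eq {m : ℕ} (A : Matrix (Fin m) (Fin m) ℝ) (h : A.rank = m) :
    IsUnit A := by
  rw [← Matrix.mulVec_injective_iff_isUnit]
  have hker : LinearMap.ker A.mulVecLin = ⊥ := by
    have h2 := LinearMap.finrank_range_add_finrank_ker A.mulVecLin
    have hr : A.rank = Module.finrank ℝ (LinearMap.range A.mulVecLin) := rfl
    rw [← hr, h] at h2
    simp only [Module.finrank_pi, Fintype.card_fin] at h2
    exact Submodule.finrank_eq_zero.mp (by omega)
  intro x y hxy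
  have : A.mulVecLin x = A.mulVecLin y := hxy
  exact (LinearMap.ker_eq_bot.mp hker) this

/-- `det(G Gᵀ) = det(Gₛ Gₛᵀ) · det(Gₜ Gₜᵀ) · det(I - Qₛ Qₜ)` where `Qₛ, Qₜ` are the
orthogonal projections onto the row spaces of `Gₛ` and `Gₜ`. -/
theorem stmt4 {n p q : ℕ}
    (Gs : Matrix (Fin p) (Fin n) ℝ) (Gt : Matrix (Fin q) (Fin n) ℝ)
    (hs : Gs.rank = p) (ht : Gt.rank = q)
    (hrank : (fromRows Gs Gt).rank = p + q) :
    (fromRows Gs Gt * (fromRows Gs Gt)ᵀ).det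
      = (Gs * Gsᵀ).det * (Gt * Gtᵀ).det *
        (1 - (Gsᵀ * (Gs * Gsᵀ)⁻¹ * Gs) * (Gtᵀ * (Gt * Gtᵀ)⁻¹ * Gt)).det := by
  set A := Gs * Gsᵀ with hAdef
  set D := Gt * Gtᵀ with hDdef
  have hA : IsUnit A := isUnit_of_rank_eq _ (by rw [hAdef, ← conjTranspose_eq_transpose_of_trivial]; rw [Matrix.rank_self_mul_conjTranspose, hs])
  have hD : IsUnit D := isUnit_of_rank_eq _ (by rw [hDdef, ← conjTranspose_eq_transpose_of_trivial]; rw [Matrix.rank_self_mul_conjTranspose, ht])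
  haveI := hA.invertible
  haveI := hD.invertible
  have hAdet : IsUnit A.det := (Matrix.isUnit_iff_isUnit_det A).mp hA
  have hDdet : IsUnit D.det := (Matrix.isUnit_iff_isUnit_det D).mp hD
  -- LHS as block determinant
  rw [transpose_fromRows, fromRows_mul_fromCols, det_fromBlocks₁₁,
    invOf_eq_nonsing_inv]
  -- RHS: use Weinstein–Aronszajn
  have key : (1 - (Gsᵀ * A⁻¹ * Gs) * (Gtᵀ * D⁻¹ * Gt)).det
      = (D - Gt * Gsᵀ * A⁻¹ * (Gs * Gtᵀ)).det * (D.det)⁻¹ := by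
    have h1 : (Gsᵀ * A⁻¹ * Gs) * (Gtᵀ * D⁻¹ * Gt)
        = (Gsᵀ * A⁻¹ * Gs * Gtᵀ * D⁻¹) * Gt := by
      simp only [Matrix.mul_assoc]
    rw [h1, det_one_sub_mul_comm]
    have h2 : Gt * (Gsᵀ * A⁻¹ * Gs * Gtᵀ * D⁻¹)
        = (Gt * Gsᵀ * A⁻¹ * (Gs * Gtᵀ)) * D⁻¹ := by
      simp only [Matrix.mul_assoc]
    have h3 : (1 : Matrix (Fin q) (Fin q) ℝ) - (Gt * Gsᵀ * A⁻¹ * (Gs * Gtᵀ)) * D⁻¹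
        = (D - Gt * Gsᵀ * A⁻¹ * (Gs * Gtᵀ)) * D⁻¹ := by
      rw [Matrix.sub_mul, Matrix.mul_nonsing_inv _ hDdet]
    rw [h2, h3, det_mul, det_nonsing_inv, Ring.inverse_eq_inv']
  rw [key]
  have hDne : D.det ≠ 0 := hDdet.ne_zero
  rw [mul_assoc, mul_comm D.det ((D - Gt * Gsᵀ * A⁻¹ * (Gs * Gtᵀ)).det * D.det⁻¹),
    mul_assoc, inv_mul_cancel₀ hDne, mul_one]
end

section
/- Let J ∈ ℝ^{n×m} be of full column rank, partitioned by P into column blocks J_{k_1}, …, J_{k_r}. Then Σ_{i=1}^r log det(J_{k_i}^T J_{k_i}) - log det(J^T J) ≥ 0, with equality if and only if J_{k_i}^T J_{k_j} = 0 for all i ≠ j. -/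
/-!
Write `G = JᵀJ`; full column rank makes `G` positive definite, and `Jₖᵀ Jₗ` is the `(k, l)`
block of `G`, so the claim is Fischer's inequality `det G ≤ ∏ₖ det Gₖₖ` with its equality case.
For two blocks, `det G = det G₁₁ · det (G₂₂ - G₁₂ᵀ G₁₁⁻¹ G₁₂)` by the Schur complement, and
adding the positive semidefinite matrix `Q = G₁₂ᵀ G₁₁⁻¹ G₁₂` to a positive definite `P` raises
the determinant strictly unless `Q = 0`: writing `P = BᵀB`, `det (P + Q) = det P · det (1 + T)`
with `T = B⁻ᵀ Q B⁻¹ ⪰ 0`, and `det (1 + T) = ∏ (1 + λᵢ(T)) > 1` as soon as `T ≠ 0`.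
Splitting off one block at a time gives the general case.
-/

open Matrix

def Equiv.sigmaFinSucc {r : ℕ} (κ : Fin (r + 1) → Type*) :
    (Σ i, κ i) ≃ κ 0 ⊕ Σ i : Fin r, κ i.succ where
  toFun x := Fin.cases (motive := fun i => κ i → κ 0 ⊕ Σ i : Fin r, κ i.succ)
    Sum.inl (fun i a => Sum.inr ⟨i, a⟩) x.1 x.2
  invFun := Sum.elim (Sigma.mk 0) (Sigma.map Fin.succ fun _ => id)
  left_inv := by
    rintro ⟨i, a⟩
    induction i using Fin.cases <;> rfl
  right_inv := by
    rintro (a | ⟨i, a⟩) <;> rfl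

namespace Matrix

section Determinant

variable {m p : Type*} [Fintype m] [Fintype p] [DecidableEq m] [DecidableEq p]

lemma IsHermitian.det_one_add {T : Matrix m m ℝ} (hT : T.IsHermitian) :
    (1 + T).det = ∏ i, (1 + hT.eigenvalues i) := by
  conv_lhs => rw [hT.spectral_theorem, ← map_one (Unitary.conjStarAlgAut ℝ _ hT.eigenvectorUnitary),
    ← map_add, Unitary.conjStarAlgAut_apply, det_mul_right_comm]
  simp [← diagonal_one, diagonal_add]

lemma PosSemidef.one_lt_det_one_add {T : Matrix m m ℝ} (hT : T.PosSemidef) (hT0 : T ≠ 0) :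
    1 < (1 + T).det := by
  obtain ⟨i, hi⟩ : ∃ i, hT.1.eigenvalues i ≠ 0 := by
    by_contra! h
    exact hT0 (hT.1.eigenvalues_eq_zero_iff.mp (funext h))
  have hpos : ∀ j, 0 ≤ hT.1.eigenvalues j := hT.eigenvalues_nonneg
  rw [hT.1.det_one_add]
  simpa using Finset.prod_lt_prod (f := fun _ => (1 : ℝ)) (fun _ _ => one_pos)
    (fun j _ => le_add_of_nonneg_right (hpos j))
    ⟨i, Finset.mem_univ i, lt_add_of_pos_right 1 ((hpos i).lt_of_ne' hi)⟩

open scoped MatrixOrder in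
lemma PosDef.det_lt_det_add {P S : Matrix m m ℝ} (hP : P.PosDef) (hS : S.PosSemidef)
    (hS0 : S ≠ 0) : P.det < (P + S).det := by
  obtain ⟨B, hB, rfl⟩ :=
    CStarAlgebra.isStrictlyPositive_iff_eq_star_mul_self.mp hP.isStrictlyPositive
  have := hB.invertible
  set T := B⁻¹ᴴ * S * B⁻¹ with hT
  have hST : Bᴴ * T * B = S := by
    rw [show Bᴴ * T * B = (B⁻¹ * B)ᴴ * S * (B⁻¹ * B) by
      simp only [T, conjTranspose_mul, Matrix.mul_assoc]]
    simp
  have hdet : (star B * B + S).det = (star B * B).det * (1 + T).det := by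
    rw [← hST, star_eq_conjTranspose,
      show Bᴴ * B + Bᴴ * T * B = Bᴴ * (1 + T) * B by noncomm_ring]
    simp only [det_mul]
    ring
  rw [hdet]
  refine lt_mul_of_one_lt_right hP.det_pos
    ((hS.conjTranspose_mul_mul_same B⁻¹).one_lt_det_one_add fun hT0 => hS0 ?_)
  rw [← hST, hT, hT0, Matrix.mul_zero, Matrix.zero_mul]

open scoped ComplexOrder MatrixOrder in
lemma PosDef.conjTranspose_mul_mul_same_eq_zero_iff {𝕜 q : Type*} [RCLike 𝕜] {A : Matrix m m 𝕜}
    (hA : A.PosDef) {B : Matrix m q 𝕜} : Bᴴ * A * B = 0 ↔ B = 0 := by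
  obtain ⟨C, hC, rfl⟩ :=
    CStarAlgebra.isStrictlyPositive_iff_eq_star_mul_self.mp hA.isStrictlyPositive
  have := hC.invertible
  rw [star_eq_conjTranspose, Matrix.mul_assoc, Matrix.mul_assoc, ← Matrix.mul_assoc Bᴴ,
    ← conjTranspose_mul, conjTranspose_mul_self_eq_zero]
  exact ⟨fun h => by simpa [h] using (inv_mul_cancel_left_of_invertible C B).symm,
    fun h => by rw [h, Matrix.mul_zero]⟩

lemma PosDef.det_lt_det_toBlocks₁₁_mul_det_toBlocks₂₂ {M : Matrix (m ⊕ p) (m ⊕ p) ℝ}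
    (hM : M.PosDef) (hB : M.toBlocks₁₂ ≠ 0) :
    M.det < M.toBlocks₁₁.det * M.toBlocks₂₂.det := by
  obtain ⟨A, B, C, D, rfl⟩ : ∃ A B C D, M = fromBlocks A B C D :=
    ⟨_, _, _, _, (fromBlocks_toBlocks M).symm⟩
  obtain rfl : C = Bᴴ := (isHermitian_fromBlocks_iff.mp hM.1).2.1.symm
  simp only [toBlocks_fromBlocks₁₁, toBlocks_fromBlocks₁₂, toBlocks_fromBlocks₂₂] at hB ⊢
  have hA : A.PosDef := hM.submatrix Sum.inl_injective
  have := hA.isUnit.invertible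
  have hdet := det_fromBlocks₁₁ A B Bᴴ D
  rw [invOf_eq_nonsing_inv] at hdet
  have hschur : (D - Bᴴ * A⁻¹ * B).PosDef := by
    refine ((PosDef.fromBlocks₁₁ B D hA).mp hM.posSemidef).posDef_iff_det_ne_zero.mpr fun h => ?_
    exact (hdet ▸ hM.det_pos).ne' (by rw [h, mul_zero])
  rw [hdet]
  refine mul_lt_mul_of_pos_left ?_ hA.det_pos
  simpa using hschur.det_lt_det_add (hA.inv.posSemidef.conjTranspose_mul_mul_same B)
    (hB ∘ (PosDef.conjTranspose_mul_mul_same_eq_zero_iff hA.inv).mp)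

lemma det_eq_mul_of_toBlocks₁₂_eq_zero {R : Type*} [CommRing R] {M : Matrix (m ⊕ p) (m ⊕ p) R}
    (hB : M.toBlocks₁₂ = 0) :
    M.det = M.toBlocks₁₁.det * M.toBlocks₂₂.det := by
  conv_lhs => rw [← fromBlocks_toBlocks M, hB]
  exact det_fromBlocks_zero₁₂ _ _ _

lemma PosDef.det_le_det_toBlocks₁₁_mul_det_toBlocks₂₂ {M : Matrix (m ⊕ p) (m ⊕ p) ℝ}
    (hM : M.PosDef) : M.det ≤ M.toBlocks₁₁.det * M.toBlocks₂₂.det := by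
  by_cases hB : M.toBlocks₁₂ = 0
  · exact (det_eq_mul_of_toBlocks₁₂_eq_zero hB).le
  · exact (hM.det_lt_det_toBlocks₁₁_mul_det_toBlocks₂₂ hB).le

lemma PosDef.det_eq_det_toBlocks₁₁_mul_det_toBlocks₂₂_iff {M : Matrix (m ⊕ p) (m ⊕ p) ℝ}
    (hM : M.PosDef) : M.det = M.toBlocks₁₁.det * M.toBlocks₂₂.det ↔ M.toBlocks₁₂ = 0 :=
  ⟨fun h => by_contra fun hB => (hM.det_lt_det_toBlocks₁₁_mul_det_toBlocks₂₂ hB).ne h,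
    det_eq_mul_of_toBlocks₁₂_eq_zero⟩

end Determinant

section SigmaBlocks

variable {r : ℕ} {κ : Fin (r + 1) → Type*}

lemma IsHermitian.forall_submatrix_sigmaMk_eq_zero_iff_fin_succ {R : Type*} [AddMonoid R]
    [StarAddMonoid R] {M : Matrix (Σ i, κ i) (Σ i, κ i) R} (hM : M.IsHermitian) :
    (∀ i j, i ≠ j → M.submatrix (Sigma.mk i) (Sigma.mk j) = 0) ↔
      (∀ k : Fin r, M.submatrix (Sigma.mk 0) (Sigma.mk k.succ) = 0) ∧
        ∀ k l : Fin r, k ≠ l → M.submatrix (Sigma.mk k.succ) (Sigma.mk l.succ) = 0 := by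
  refine ⟨fun h => ⟨fun k => h _ _ k.succ_ne_zero.symm,
    fun k l hkl => h _ _ (Fin.succ_injective _ |>.ne hkl)⟩, fun ⟨h₀, hs⟩ i j hij => ?_⟩
  have hsymm : ∀ i j, M.submatrix (Sigma.mk j) (Sigma.mk i) =
      (M.submatrix (Sigma.mk i) (Sigma.mk j))ᴴ := fun i j => by
    rw [conjTranspose_submatrix, hM.eq]
  induction i using Fin.cases with
  | zero =>
    induction j using Fin.cases with
    | zero => exact absurd rfl hij
    | succ l => exact h₀ l
  | succ k =>
    induction j using Fin.cases with
    | zero => rw [hsymm, h₀ k, conjTranspose_zero]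
    | succ l => exact hs k l (ne_of_apply_ne Fin.succ hij)

lemma toBlocks₁₂_reindex_sigmaFinSucc_eq_zero_iff {R : Type*} [Zero R]
    (M : Matrix (Σ i, κ i) (Σ i, κ i) R) :
    (M.reindex (Equiv.sigmaFinSucc κ) (Equiv.sigmaFinSucc κ)).toBlocks₁₂ = 0 ↔
      ∀ k : Fin r, M.submatrix (Sigma.mk 0) (Sigma.mk k.succ) = 0 :=
  ⟨fun h k => by ext a b; exact congr_fun₂ h a ⟨k, b⟩,
    fun h => by ext a ⟨k, b⟩; exact congr_fun₂ (h k) a b⟩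

lemma det_toBlocks₁₁_reindex_sigmaFinSucc_mul_prod [∀ i, Fintype (κ i)] [∀ i, DecidableEq (κ i)]
    (M : Matrix (Σ i, κ i) (Σ i, κ i) ℝ) :
    (M.reindex (Equiv.sigmaFinSucc κ) (Equiv.sigmaFinSucc κ)).toBlocks₁₁.det *
      ∏ k : Fin r, ((M.reindex (Equiv.sigmaFinSucc κ) (Equiv.sigmaFinSucc κ)).toBlocks₂₂.submatrix
        (Sigma.mk k) (Sigma.mk k)).det =
      ∏ i, (M.submatrix (Sigma.mk i) (Sigma.mk i)).det := by
  rw [Fin.prod_univ_succ]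
  rfl

end SigmaBlocks

theorem PosDef.det_le_prod_det_submatrix_sigmaMk : ∀ {r : ℕ} {κ : Fin r → Type*}
    [∀ i, Fintype (κ i)] [∀ i, DecidableEq (κ i)] {M : Matrix (Σ i, κ i) (Σ i, κ i) ℝ},
    M.PosDef → M.det ≤ ∏ i, (M.submatrix (Sigma.mk i) (Sigma.mk i)).det
  | 0, _, _, _, M, _ => by simp
  | r + 1, κ, _, _, M, hM => by
    set N := M.reindex (Equiv.sigmaFinSucc κ) (Equiv.sigmaFinSucc κ)
    have hN : N.PosDef := hM.submatrix (Equiv.sigmaFinSucc κ).symm.injective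
    rw [← det_toBlocks₁₁_reindex_sigmaFinSucc_mul_prod, ← det_reindex_self (Equiv.sigmaFinSucc κ) M]
    calc N.det ≤ N.toBlocks₁₁.det * N.toBlocks₂₂.det :=
          hN.det_le_det_toBlocks₁₁_mul_det_toBlocks₂₂
      _ ≤ _ := mul_le_mul_of_nonneg_left
          (det_le_prod_det_submatrix_sigmaMk (hN.submatrix Sum.inr_injective))
          (hN.submatrix Sum.inl_injective).det_pos.le

theorem PosDef.det_eq_prod_det_submatrix_sigmaMk_iff : ∀ {r : ℕ} {κ : Fin r → Type*}
    [∀ i, Fintype (κ i)] [∀ i, DecidableEq (κ i)] {M : Matrix (Σ i, κ i) (Σ i, κ i) ℝ},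
    M.PosDef → (M.det = ∏ i, (M.submatrix (Sigma.mk i) (Sigma.mk i)).det ↔
      ∀ i j, i ≠ j → M.submatrix (Sigma.mk i) (Sigma.mk j) = 0)
  | 0, _, _, _, M, _ => by simp
  | r + 1, κ, _, _, M, hM => by
    set N := M.reindex (Equiv.sigmaFinSucc κ) (Equiv.sigmaFinSucc κ)
    have hN : N.PosDef := hM.submatrix (Equiv.sigmaFinSucc κ).symm.injective
    have hA : N.toBlocks₁₁.PosDef := hN.submatrix Sum.inl_injective
    have hD : N.toBlocks₂₂.PosDef := hN.submatrix Sum.inr_injective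
    have squeeze {x a y z : ℝ} (ha : 0 < a) (hxy : x ≤ a * y) (hyz : y ≤ z) :
        x = a * z ↔ x = a * y ∧ y = z := by
      refine ⟨fun h => ?_, fun ⟨h₁, h₂⟩ => h₂ ▸ h₁⟩
      have hx : x = a * y := le_antisymm hxy (h ▸ mul_le_mul_of_nonneg_left hyz ha.le)
      exact ⟨hx, mul_left_cancel₀ ha.ne' (hx.symm.trans h)⟩
    rw [← det_toBlocks₁₁_reindex_sigmaFinSucc_mul_prod, ← det_reindex_self (Equiv.sigmaFinSucc κ) M,
      squeeze hA.det_pos hN.det_le_det_toBlocks₁₁_mul_det_toBlocks₂₂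
        hD.det_le_prod_det_submatrix_sigmaMk,
      hN.det_eq_det_toBlocks₁₁_mul_det_toBlocks₂₂_iff, toBlocks₁₂_reindex_sigmaFinSucc_eq_zero_iff,
      det_eq_prod_det_submatrix_sigmaMk_iff hD, hM.1.forall_submatrix_sigmaMk_eq_zero_iff_fin_succ]
    -- the blocks of `N.toBlocks₂₂` are those of `M` with shifted indices, definitionally
    rfl

lemma mulVec_injective_of_rank_eq_card {m n K : Type*} [Fintype n] [Field K] {A : Matrix m n K}
    (h : A.rank = Fintype.card n) : Function.Injective A.mulVec := by
  have := LinearMap.finrank_range_add_finrank_ker A.mulVecLin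
  rw [← rank, h, Module.finrank_fintype_fun_eq_card, add_eq_left, Submodule.finrank_eq_zero,
    LinearMap.ker_eq_bot] at this
  exact this

lemma submatrix_transpose_mul_self {l m n α : Type*} [Fintype m] [Mul α] [AddCommMonoid α]
    (A : Matrix m n α) (e₁ e₂ : l → n) :
    (Aᵀ * A).submatrix e₁ e₂ = (A.submatrix id e₁)ᵀ * A.submatrix id e₂ := by
  rw [submatrix_mul _ _ _ id _ Function.bijective_id, transpose_submatrix]

end Matrix

/-- For a full-column-rank matrix `J` partitioned into column blocks, the pointwise mutual
information of the partition `∑ₖ log det(Jₖᵀ Jₖ) - log det(Jᵀ J)` is nonnegative, and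
vanishes iff the blocks are pairwise orthogonal. -/
theorem stmt9 {n r : ℕ} {d : Fin r → ℕ}
    (J : Matrix (Fin n) ((i : Fin r) × Fin (d i)) ℝ)
    (hrank : J.rank = Fintype.card ((i : Fin r) × Fin (d i))) :
    0 ≤ (∑ i : Fin r,
          Real.log ((J.submatrix id (Sigma.mk i))ᵀ * J.submatrix id (Sigma.mk i)).det)
        - Real.log (Jᵀ * J).det ∧
    ((∑ i : Fin r,
          Real.log ((J.submatrix id (Sigma.mk i))ᵀ * J.submatrix id (Sigma.mk i)).det)
        - Real.log (Jᵀ * J).det = 0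
      ↔ ∀ i j : Fin r, i ≠ j →
          (J.submatrix id (Sigma.mk i))ᵀ * J.submatrix id (Sigma.mk j) = 0) := by
  have hG : (Jᵀ * J).PosDef := by
    simpa [conjTranspose_eq_transpose_of_trivial] using
      PosDef.conjTranspose_mul_self J (mulVec_injective_of_rank_eq_card hrank)
  have hblock : ∀ i, 0 < ((Jᵀ * J).submatrix (Sigma.mk i) (Sigma.mk i)).det := fun i =>
    (hG.submatrix sigma_mk_injective).det_pos
  simp_rw [← submatrix_transpose_mul_self]
  rw [← Real.log_prod fun i _ => (hblock i).ne', sub_nonneg, sub_eq_zero,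
    Real.log_le_log_iff hG.det_pos (Finset.prod_pos fun i _ => hblock i),
    Real.log_injOn_pos.eq_iff (Finset.prod_pos fun i _ => hblock i) hG.det_pos, eq_comm]
  exact ⟨hG.det_le_prod_det_submatrix_sigmaMk, hG.det_eq_prod_det_submatrix_sigmaMk_iff⟩
end

section
/- Let J ∈ ℝ^{n×n} be invertible and let G = J^{-1}. For a partition P of {1,…,n}, let J_k be the columns of J in block k and G_k the rows of G in block k. Then det(J^T J) = ∏_{k∈P} det(J_k^T J_k) if and only if det(G G^T) = ∏_{k∈P} det(G_k G_k^T). -/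
/-!
With `A = Jᵀ J`, which is positive definite, the diagonal blocks of `A` are the `J_kᵀ J_k`, and
`A⁻¹ = G Gᵀ` has the `G_k G_kᵀ` as diagonal blocks; so the claim is that for positive definite `A`,
`det A = ∏ det A_kk` iff `det A⁻¹ = ∏ det (A⁻¹)_kk`. Fischer's inequality gives
`det A⁻¹ ≤ ∏ det (A⁻¹)_kk`. Conversely, Jacobi's identity `det (A⁻¹)_kk = det A_{≠k} / det A`
for the complementary principal minor, Fischer's inequality for `A_{≠k}`, and equality for `A`
give `det (A⁻¹)_kk ≤ (det A_kk)⁻¹`; taking the product over `k` gives the reverse inequality.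
The converse is the same argument applied to `A⁻¹`.
-/

open Matrix

def Equiv.sumSigmaNe {K : Type*} [DecidableEq K] (κ : K → Type*) (k₀ : K) :
    κ k₀ ⊕ (Σ l : {l // l ≠ k₀}, κ l) ≃ Σ k, κ k where
  toFun := Sum.elim (Sigma.mk k₀) fun p => ⟨p.1, p.2⟩
  invFun p := if h : p.1 = k₀ then .inl (h ▸ p.2) else .inr ⟨⟨p.1, h⟩, p.2⟩
  left_inv := by
    rintro (j | ⟨⟨l, hl⟩, j⟩)
    · simp
    · simp [hl]
  right_inv := by
    rintro ⟨l, j⟩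
    by_cases h : l = k₀
    · subst h; simp
    · simp [h]

namespace Matrix

section Loewner

open scoped MatrixOrder

variable {n : Type*} [Fintype n] [DecidableEq n]

theorem PosSemidef.one_le_det_one_add {Q : Matrix n n ℝ} (hQ : Q.PosSemidef) :
    1 ≤ (1 + Q).det := by
  have hQsa : IsSelfAdjoint Q := hQ.1
  have hcfc : 1 + Q = cfc (fun x : ℝ => 1 + x) Q := by
    rw [cfc_add .., cfc_const_one .., cfc_id' ..]
  rw [hcfc, hQ.1.cfc_eq]
  simp only [IsHermitian.cfc, RCLike.ofReal_real_eq_id, CompTriple.comp_eq, det_map,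
    det_diagonal, Function.comp_apply]
  exact Finset.one_le_prod fun i _ => le_add_of_nonneg_right (hQ.eigenvalues_nonneg i)

theorem PosSemidef.det_le_det_add {S P : Matrix n n ℝ} (hS : S.PosSemidef) (hP : P.PosSemidef) :
    S.det ≤ (S + P).det := by
  obtain ⟨B, rfl⟩ := CStarAlgebra.nonneg_iff_eq_star_mul_self.mp hS.nonneg
  rw [star_eq_conjTranspose] at hS ⊢
  by_cases hB : B.det = 0
  · rw [det_mul, hB, mul_zero]
    exact (hS.add hP).det_nonneg
  · have := B.invertibleOfIsUnitDet (isUnit_iff_ne_zero.mpr hB)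
    have hsplit : Bᴴ * B + P = Bᴴ * (1 + (B⁻¹)ᴴ * P * B⁻¹) * B := by
      rw [conjTranspose_nonsing_inv]
      simp [Matrix.mul_add, Matrix.add_mul, Matrix.mul_assoc]
    have hdet : (Bᴴ * (1 + (B⁻¹)ᴴ * P * B⁻¹) * B).det
        = (Bᴴ * B).det * (1 + (B⁻¹)ᴴ * P * B⁻¹).det := by
      simp only [det_mul]; ring
    rw [hsplit, hdet]
    exact le_mul_of_one_le_right hS.det_nonneg
      (hP.conjTranspose_mul_mul_same B⁻¹).one_le_det_one_add

end Loewner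

theorem IsHermitian.exists_eq_fromBlocks {m n α : Type*} [InvolutiveStar α]
    {B : Matrix (m ⊕ n) (m ⊕ n) α} (hB : B.IsHermitian) :
    ∃ A C D, B = Matrix.fromBlocks A C Cᴴ D := by
  refine ⟨B.toBlocks₁₁, B.toBlocks₁₂, B.toBlocks₂₂, ?_⟩
  have hH : (Matrix.fromBlocks B.toBlocks₁₁ B.toBlocks₁₂ B.toBlocks₂₁ B.toBlocks₂₂).IsHermitian := by
    rwa [fromBlocks_toBlocks]
  rw [(isHermitian_fromBlocks_iff.mp hH).2.1, fromBlocks_toBlocks]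

section SchurComplement

variable {m n : Type*} [Fintype m] [Fintype n] [DecidableEq m] [DecidableEq n]

theorem det_toBlocks₁₁_inv {α : Type*} [Field α] {B : Matrix (m ⊕ n) (m ⊕ n) α}
    (hB : IsUnit B.det) (hD : IsUnit B.toBlocks₂₂.det) :
    B⁻¹.toBlocks₁₁.det = B.toBlocks₂₂.det / B.det := by
  obtain ⟨A, C, C', D, rfl⟩ : ∃ A C C' D, B = fromBlocks A C C' D :=
    ⟨_, _, _, _, (fromBlocks_toBlocks B).symm⟩
  rw [toBlocks_fromBlocks₂₂] at hD ⊢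
  have := D.invertibleOfIsUnitDet hD
  have hdet := det_fromBlocks₂₂ A C C' D
  have : Invertible (A - C * ⅟D * C') :=
    invertibleOfIsUnitDet _ (isUnit_of_mul_isUnit_right (hdet ▸ hB))
  have := fromBlocks₂₂Invertible A C C' D
  rw [← invOf_eq_nonsing_inv, invOf_fromBlocks₂₂_eq, toBlocks_fromBlocks₁₁, hdet,
    invOf_eq_nonsing_inv (A - C * ⅟D * C'), det_nonsing_inv, Ring.inverse_eq_inv,
    div_mul_cancel_left₀ hD.ne_zero]

theorem PosDef.det_le_det_toBlocks₁₁_mul_det_toBlocks₂₂_s11 {B : Matrix (m ⊕ n) (m ⊕ n) ℝ}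
    (hB : B.PosDef) : B.det ≤ B.toBlocks₁₁.det * B.toBlocks₂₂.det := by
  obtain ⟨A, C, D, rfl⟩ := hB.isHermitian.exists_eq_fromBlocks
  have hD : D.PosDef := hB.submatrix Sum.inr_injective
  have := hD.isUnit.invertible
  have hS : (A - C * D⁻¹ * Cᴴ).PosSemidef := (PosDef.fromBlocks₂₂ _ _ hD).mp hB.posSemidef
  have hSA : (A - C * D⁻¹ * Cᴴ).det ≤ A.det := by
    simpa using hS.det_le_det_add (hD.inv.posSemidef.mul_mul_conjTranspose_same C)
  rw [det_fromBlocks₂₂, invOf_eq_nonsing_inv, toBlocks_fromBlocks₁₁, toBlocks_fromBlocks₂₂,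
    mul_comm A.det]
  exact mul_le_mul_of_nonneg_left hSA hD.det_pos.le

end SchurComplement

theorem blockDiag'_mul {R ι : Type*} [Fintype ι] [NonUnitalNonAssocSemiring R] {K : Type*}
    {m' n' : K → Type*} (M : Matrix (Σ k, m' k) ι R) (N : Matrix ι (Σ k, n' k) R) (k : K) :
    (M * N).blockDiag' k = M.submatrix (Sigma.mk k) id * N.submatrix id (Sigma.mk k) :=
  submatrix_mul M N _ id _ Function.bijective_id

section Fischer

variable {K : Type*} [Fintype K] [DecidableEq K] {κ : K → Type*} [∀ k, Fintype (κ k)]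
  [∀ k, DecidableEq (κ k)] {A : Matrix (Σ k, κ k) (Σ k, κ k) ℝ}

theorem PosDef.det_le_prod_det_blockDiag' (hA : A.PosDef) :
    A.det ≤ ∏ k, (A.blockDiag' k).det := by
  induction hN : Fintype.card K generalizing K with
  | zero =>
    have := Fintype.card_eq_zero_iff.mp hN
    simp
  | succ N ih =>
    obtain ⟨k₀⟩ : Nonempty K := Fintype.card_pos_iff.mp (by omega)
    have hcard : Fintype.card {l // l ≠ k₀} = N := by
      have := Fintype.card_congr (Equiv.optionSubtypeNe k₀)
      rw [Fintype.card_option] at this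
      omega
    let σ := Equiv.sumSigmaNe κ k₀
    have hB := hA.submatrix σ.injective
    calc A.det = (A.submatrix σ σ).det := (det_submatrix_equiv_self σ A).symm
      _ ≤ (A.blockDiag' k₀).det * (A.submatrix σ σ).toBlocks₂₂.det :=
        hB.det_le_det_toBlocks₁₁_mul_det_toBlocks₂₂_s11
      _ ≤ (A.blockDiag' k₀).det * ∏ l : {l // l ≠ k₀}, (A.blockDiag' l).det := by
        gcongr
        · exact (hA.submatrix sigma_mk_injective).det_pos.le
        · exact ih (hB.submatrix Sum.inr_injective) hcard
      _ = ∏ k, (A.blockDiag' k).det :=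
        (Fintype.prod_eq_mul_prod_subtype_ne (fun k => (A.blockDiag' k).det) k₀).symm

theorem PosDef.det_blockDiag'_inv_le_of_det_eq_prod (hA : A.PosDef)
    (h : A.det = ∏ k, (A.blockDiag' k).det) (k : K) :
    (A⁻¹.blockDiag' k).det ≤ (A.blockDiag' k).det⁻¹ := by
  let σ := Equiv.sumSigmaNe κ k
  have hB := hA.submatrix σ.injective
  have hrest : (A.submatrix σ σ).toBlocks₂₂.det ≤ ∏ l : {l // l ≠ k}, (A.blockDiag' l).det :=
    (hB.submatrix Sum.inr_injective).det_le_prod_det_blockDiag'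
  have hjacobi : (A⁻¹.blockDiag' k).det = (A.submatrix σ σ).toBlocks₂₂.det / A.det := by
    rw [← det_submatrix_equiv_self σ A, ← det_toBlocks₁₁_inv hB.det_pos.ne'.isUnit
      (hB.submatrix Sum.inr_injective).det_pos.ne'.isUnit, inv_submatrix_equiv]
    rfl
  have hk : (A.blockDiag' k).det ≠ 0 := (hA.submatrix sigma_mk_injective).det_pos.ne'
  rw [hjacobi, div_le_iff₀ hA.det_pos, h, Fintype.prod_eq_mul_prod_subtype_ne _ k,
    inv_mul_cancel_left₀ hk]
  exact hrest

theorem PosDef.det_inv_eq_prod_of_det_eq_prod (hA : A.PosDef)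
    (h : A.det = ∏ k, (A.blockDiag' k).det) : A⁻¹.det = ∏ k, (A⁻¹.blockDiag' k).det := by
  refine le_antisymm hA.inv.det_le_prod_det_blockDiag' ?_
  calc ∏ k, (A⁻¹.blockDiag' k).det ≤ ∏ k, (A.blockDiag' k).det⁻¹ :=
        Finset.prod_le_prod (fun k _ => (hA.inv.submatrix sigma_mk_injective).det_pos.le)
          fun k _ => hA.det_blockDiag'_inv_le_of_det_eq_prod h k
    _ = A⁻¹.det := by rw [Finset.prod_inv_distrib, ← h, det_nonsing_inv, Ring.inverse_eq_inv]

theorem PosDef.det_eq_prod_iff_det_inv_eq_prod (hA : A.PosDef) :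
    A.det = ∏ k, (A.blockDiag' k).det ↔ A⁻¹.det = ∏ k, (A⁻¹.blockDiag' k).det := by
  refine ⟨hA.det_inv_eq_prod_of_det_eq_prod, fun h => ?_⟩
  simpa only [nonsing_inv_nonsing_inv A hA.det_pos.ne'.isUnit] using
    hA.inv.det_inv_eq_prod_of_det_eq_prod h

end Fischer

end Matrix

/-- For an invertible square `J` with inverse `G = J⁻¹` and a partition of the indices:
`det(Jᵀ J) = ∏ₖ det(Jₖᵀ Jₖ)` (column blocks of `J`) holds iff
`det(G Gᵀ) = ∏ₖ det(Gₖ Gₖᵀ)` (row blocks of `G`). -/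
theorem stmt11 {r : ℕ} {d : Fin r → ℕ}
    (J : Matrix ((i : Fin r) × Fin (d i)) ((i : Fin r) × Fin (d i)) ℝ)
    (hJ : IsUnit J.det) :
    ((Jᵀ * J).det
        = ∏ k : Fin r, ((J.submatrix id (Sigma.mk k))ᵀ * J.submatrix id (Sigma.mk k)).det)
      ↔ ((J⁻¹ * (J⁻¹)ᵀ).det
        = ∏ k : Fin r,
            (J⁻¹.submatrix (Sigma.mk k) id * (J⁻¹.submatrix (Sigma.mk k) id)ᵀ).det) := by
  have hA : (Jᵀ * J).PosDef := by
    simpa using PosDef.conjTranspose_mul_self J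
      (mulVec_injective_iff_isUnit.mpr ((isUnit_iff_isUnit_det J).mpr hJ))
  have hinv : (Jᵀ * J)⁻¹ = J⁻¹ * J⁻¹ᵀ := by rw [Matrix.mul_inv_rev, transpose_nonsing_inv]
  simpa only [hinv, blockDiag'_mul, transpose_submatrix] using
    hA.det_eq_prod_iff_det_inv_eq_prod
end

section
/- Let G ∈ ℝ^{m×n} with m ≤ n have full row rank, and suppose G factors as G = V Σ W^T where V is block-diagonal orthogonal (with respect to partition P of {1,…,m}), Σ is diagonal positive, and W ∈ ℝ^{n×m} has orthonormal columns. Then for every block k of P, G_k G_k^T (rows of G in block k) is similar to Σ_k² via the orthogonal block V_k, and det(G G^T) = ∏_{k∈P} det(G_k G_k^T). -/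
open Matrix

/-- If `G = V Σ Wᵀ` with `V` block diagonal with orthogonal blocks, `Σ` diagonal positive
and `W` semi-orthogonal, then each `Gₖ Gₖᵀ` (rows of `G` in block `k`) is similar to `Σₖ²`
via the orthogonal block `vₖ`, and `det(G Gᵀ) = ∏ₖ det(Gₖ Gₖᵀ)`. -/
theorem stmt18 {n r : ℕ} {d : Fin r → ℕ}
    (hn : Fintype.card ((i : Fin r) × Fin (d i)) ≤ n)
    (G : Matrix ((i : Fin r) × Fin (d i)) (Fin n) ℝ)
    (hrank : G.rank = Fintype.card ((i : Fin r) × Fin (d i)))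
    (v : ∀ i : Fin r, Matrix (Fin (d i)) (Fin (d i)) ℝ)
    (σ : ((i : Fin r) × Fin (d i)) → ℝ)
    (W : Matrix (Fin n) ((i : Fin r) × Fin (d i)) ℝ)
    (hv : ∀ i, (v i)ᵀ * v i = 1 ∧ v i * (v i)ᵀ = 1)
    (hσ : ∀ a, 0 < σ a)
    (hW : Wᵀ * W = 1)
    (hG : G = blockDiagonal' v * diagonal σ * Wᵀ) :
    (∀ k : Fin r,
      G.submatrix (Sigma.mk k) id * (G.submatrix (Sigma.mk k) id)ᵀ
        = v k * diagonal (fun b : Fin (d k) => σ ⟨k, b⟩ ^ 2) * (v k)ᵀ) ∧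
    (G * Gᵀ).det
      = ∏ k : Fin r,
          (G.submatrix (Sigma.mk k) id * (G.submatrix (Sigma.mk k) id)ᵀ).det := by
  have key : G * Gᵀ = blockDiagonal'
      (fun k => v k * diagonal (fun b : Fin (d k) => σ ⟨k, b⟩ ^ 2) * (v k)ᵀ) := by
    have h0 : G * Gᵀ = blockDiagonal' v * diagonal σ * (Wᵀ * W) * (diagonal σ)ᵀ
        * (blockDiagonal' v)ᵀ := by
      subst hG
      simp only [transpose_mul, transpose_transpose, Matrix.mul_assoc]
    rw [hW, mul_one, diagonal_transpose] at h0
    rw [h0, Matrix.mul_assoc (blockDiagonal' v) (diagonal σ) (diagonal σ),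
      diagonal_mul_diagonal]
    have hdiag : (diagonal (fun a => σ a * σ a) :
        Matrix ((i : Fin r) × Fin (d i)) ((i : Fin r) × Fin (d i)) ℝ)
        = blockDiagonal' (fun k => diagonal (fun b : Fin (d k) => σ ⟨k, b⟩ ^ 2)) := by
      rw [blockDiagonal'_diagonal]
      congr 1
      ext ⟨i, b⟩
      ring
    rw [hdiag, blockDiagonal'_transpose, ← blockDiagonal'_mul, ← blockDiagonal'_mul]
  have hentry : ∀ (k : Fin r) (a b : Fin (d k)),
      (G.submatrix (Sigma.mk k) id * (G.submatrix (Sigma.mk k) id)ᵀ) a b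
        = (G * Gᵀ) ⟨k, a⟩ ⟨k, b⟩ := by
    intro k a b
    simp [mul_apply]
  have part1 : ∀ k : Fin r,
      G.submatrix (Sigma.mk k) id * (G.submatrix (Sigma.mk k) id)ᵀ
        = v k * diagonal (fun b : Fin (d k) => σ ⟨k, b⟩ ^ 2) * (v k)ᵀ := by
    intro k
    ext a b
    rw [hentry, key, blockDiagonal'_apply_eq]
  refine ⟨part1, ?_⟩
  have ht : BlockTriangular (G * Gᵀ) Sigma.fst := by
    rw [key]; exact blockTriangular_blockDiagonal' _
  rw [ht.det_fintype]
  refine Finset.prod_congr rfl fun k _ => ?_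
  let e : Fin (d k) ≃ { a : (i : Fin r) × Fin (d i) // a.1 = k } :=
    { toFun := fun b => ⟨⟨k, b⟩, rfl⟩
      invFun := fun a => Fin.cast (congrArg d a.2) a.1.2
      left_inv := fun b => rfl
      right_inv := fun a => by rcases a with ⟨⟨i, b⟩, h⟩; subst h; rfl }
  rw [← Matrix.det_submatrix_equiv_self e ((G * Gᵀ).toSquareBlock Sigma.fst k)]
  have he : ((G * Gᵀ).toSquareBlock Sigma.fst k).submatrix e e
      = G.submatrix (Sigma.mk k) id * (G.submatrix (Sigma.mk k) id)ᵀ := by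
    ext a b
    exact (hentry k a b).symm
  rw [he]
end
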